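/- Let T ⊆ 2^{<ω} be a Silver tree and let f : 2^ω × ω^ω → 2^ω be a Borel map. Then there exist a Silver tree S ⊆ T and a dense G_δ set D ⊆ ω^ω such that the restriction of f to [S] × D is continuous. -/

import Mathlib

open Set

/-- The word `u₀⌢i₀⌢u₁⌢i₁⌢…⌢u_n⌢i_n` built from the defining tuples `u`
and the choice of bits `i`. -/
def silverWord (u : ℕ → List Bool) (i : ℕ → Bool) : ℕ → List Bool
  | 0 => u 0 ++ [i 0]
  | n + 1 => silverWord u i n ++ (u (n + 1) ++ [i (n + 1)])

/-- `T ⊆ 2^{<ω}` is the Silver tree with defining tuples `u`: it consists of all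
tuples `u₀⌢i₀⌢…⌢u_n⌢i_n` together with all their initial segments. -/
def IsSilver (T : Set (List Bool)) (u : ℕ → List Bool) : Prop :=
  T = { s | ∃ (n : ℕ) (i : ℕ → Bool), s <+: silverWord u i n }

/-- `T` is a Silver tree. -/
def SilverTree (T : Set (List Bool)) : Prop :=
  ∃ u, IsSilver T u

/-- The portion `T↾u = {s ∈ T : u ⊆ s or s ⊆ u}`. -/
def portion (T : Set (List Bool)) (u : List Bool) : Set (List Bool) :=
  { s ∈ T | u <+: s ∨ s <+: u }

/-- The shift `σ⊕v` of a tuple `v` by a tuple `σ` (coordinatewise mod-2 sum,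
with `σ` padded by `0` or truncated to the length of `v`). -/
def shiftT (σ v : List Bool) : List Bool :=
  List.ofFn fun i : Fin v.length => xor (v.get i) (σ.getD i.1 false)

/-- The shift `σ⊕T` of a set of tuples. -/
def shiftTree (σ : List Bool) (T : Set (List Bool)) : Set (List Bool) :=
  shiftT σ '' T

/-- The shift `σ⊕a` of a point of Cantor space. -/
def shiftR (σ : List Bool) (a : ℕ → Bool) : ℕ → Bool :=
  fun i => xor (a i) (σ.getD i false)

/-- The restriction `a↾n ∈ 2^{<ω}` of `a ∈ 2^ω`. -/
def restrictReal (a : ℕ → Bool) (n : ℕ) : List Bool :=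
  List.ofFn fun i : Fin n => a i.1

/-- `[T]`, the set of branches of `T`. -/
def branches (T : Set (List Bool)) : Set (ℕ → Bool) :=
  { a | ∀ n, restrictReal a n ∈ T }

/-- The splitting levels `oi_T(n) = |u₀|+1+…+|u_{n-1}|+1+|u_n|` computed
from the defining tuples `u`. -/
def oi (u : ℕ → List Bool) (n : ℕ) : ℕ :=
  (∑ k ∈ Finset.range (n + 1), (u k).length) + n

/-- `S ⊑ₙ T` : `S ⊆ T` and the first `n` splitting levels agree. -/
def RefinesN (S T : Set (List Bool)) (n : ℕ) : Prop :=
  S ⊆ T ∧ ∀ uS uT : ℕ → List Bool, IsSilver S uS → IsSilver T uT →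
    ∀ k < n, oi uS k = oi uT k

/-- `S` is clopen in `T` : `S` is a finite union of portions of `T`. -/
def ClopenIn (S T : Set (List Bool)) : Prop :=
  ∃ F : Finset (List Bool), ↑F ⊆ T ∧ S = ⋃ u ∈ F, portion T u

/-- The Baire interval `B_v = {x ∈ ω^ω : v ⊂ x}`. -/
def baire (v : List ℕ) : Set (ℕ → ℕ) :=
  { x | ∀ i : Fin v.length, x i.1 = v.get i }

/-- `s ∈ 2^{<ω}` is an initial segment of `a ∈ 2^ω`. -/
def prefixOfReal (s : List Bool) (a : ℕ → Bool) : Prop :=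
  ∀ i : Fin s.length, a i.1 = s.get i

/-!
A Borel map is continuous on a dense `G_δ` subset of the Polish space `[T] × ω^ω`, hence on
`[T] × ω^ω ∩ ⋂ c, W c` for open sets `W c` that are dense in `[T] × ω^ω`. It remains to find a
Silver tree `S ⊆ T` and a dense `G_δ` set `D` with `[S] × D ⊆ ⋂ c, W c`, by a fusion along an
enumeration of all pairs `(c, w)` with `w ∈ ω^{<ω}`. Stage `j` keeps one more splitting level of
`T` for good; for each of the finitely many choices of the kept bits in turn, it fixes the other
bits up to a new level and extends `w` to `v_j` so that the resulting box `[s] × [v_j]` lies in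
`W c` (a single box is found because `W c` is open and dense in `[T] × ω^ω`). The kept levels
span `S`, and `D = ⋂ c, ⋃ {[v_j] : stage j treats c}` is dense because every `w` gets extended.
-/

open Topology Filter TopologicalSpace

section Cylinder

variable {α : Type*}

-- `initSeg` and `listCylinder` generalize `restrictReal` and `baire` (or `prefixOfReal`)
-- definitionally to an arbitrary alphabet.
def initSeg (x : ℕ → α) (n : ℕ) : List α := List.ofFn fun k : Fin n => x k

def listCylinder (v : List α) : Set (ℕ → α) := {x | ∀ k : Fin v.length, x k = v.get k}

@[simp] lemma length_initSeg (x : ℕ → α) (n : ℕ) : (initSeg x n).length = n := by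
  simp [initSeg]

lemma mem_listCylinder {v : List α} {x : ℕ → α} :
    x ∈ listCylinder v ↔ ∀ k (hk : k < v.length), x k = v[k] :=
  ⟨fun h k hk => h ⟨k, hk⟩, fun h k => h k k.2⟩

lemma initSeg_eq_iff {v : List α} {x : ℕ → α} :
    initSeg x v.length = v ↔ x ∈ listCylinder v := by
  simp [mem_listCylinder, List.ext_get_iff, initSeg]

lemma initSeg_prefix (x : ℕ → α) {m n : ℕ} (h : m ≤ n) : initSeg x m <+: initSeg x n := by
  rw [List.prefix_iff_eq_take]
  apply List.ext_getElem (by simp [h])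
  simp [initSeg]

lemma listCylinder_anti {v w : List α} (h : v <+: w) : listCylinder w ⊆ listCylinder v := by
  simp only [subset_def, mem_listCylinder]
  intro x hx k hk
  rw [hx k (hk.trans_le h.length_le), h.getElem hk]

lemma prefix_initSeg {v : List α} {x : ℕ → α} (hx : x ∈ listCylinder v) {n : ℕ}
    (hn : v.length ≤ n) : v <+: initSeg x n :=
  initSeg_eq_iff.mpr hx ▸ initSeg_prefix x hn

lemma initSeg_prefix_of_mem {v : List α} {x : ℕ → α} (hx : x ∈ listCylinder v) {n : ℕ}
    (hn : n ≤ v.length) : initSeg x n <+: v :=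
  initSeg_eq_iff.mpr hx ▸ initSeg_prefix x hn

lemma getD_mem_listCylinder_of_prefix {w : ℕ → List α} (hw : ∀ {m n}, m ≤ n → w m <+: w n)
    (hlen : ∀ n, n < (w n).length) (d : α) (n : ℕ) :
    (fun k => (w k).getD k d) ∈ listCylinder (w n) := by
  refine mem_listCylinder.mpr fun k hk => ?_
  simp only [List.getD_eq_getElem _ _ (hlen k), (hw (le_max_left k n)).getElem (hlen k),
    (hw (le_max_right k n)).getElem hk]

lemma getD_mem_listCylinder (v : List α) (d : α) : (fun k => v.getD k d) ∈ listCylinder v :=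
  mem_listCylinder.mpr fun k hk => by simp [hk]

variable [TopologicalSpace α]

lemma exists_listCylinder_subset {s : Set (ℕ → α)} {x : ℕ → α} (hs : s ∈ 𝓝 x) :
    ∃ n, listCylinder (initSeg x n) ⊆ s := by
  obtain ⟨I, hI, t, ht, hsub⟩ := Filter.mem_pi.mp (by rwa [nhds_pi] at hs)
  obtain ⟨n, hn⟩ := hI.bddAbove
  refine ⟨n + 1, fun y hy => hsub fun k hk => ?_⟩
  have hy := (mem_listCylinder.mp hy) k (by simpa using Nat.lt_succ_of_le (hn hk))
  simp only [initSeg, List.getElem_ofFn] at hy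
  rw [hy]
  exact mem_of_mem_nhds (ht k)

lemma exists_listCylinder_prod_subset {β : Type*} [TopologicalSpace β]
    {s : Set ((ℕ → α) × (ℕ → β))} {p : (ℕ → α) × (ℕ → β)} (hs : s ∈ 𝓝 p) :
    ∃ n, listCylinder (initSeg p.1 n) ×ˢ listCylinder (initSeg p.2 n) ⊆ s := by
  obtain ⟨s₁, hs₁, s₂, hs₂, hsub⟩ :=
    mem_nhds_prod_iff.mp (by rwa [← Prod.mk.eta (p := p)] at hs)
  obtain ⟨n₁, hn₁⟩ := exists_listCylinder_subset hs₁
  obtain ⟨n₂, hn₂⟩ := exists_listCylinder_subset hs₂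
  refine ⟨max n₁ n₂, fun q ⟨hq₁, hq₂⟩ => hsub ⟨hn₁ ?_, hn₂ ?_⟩⟩
  · exact listCylinder_anti (initSeg_prefix _ (le_max_left _ _)) hq₁
  · exact listCylinder_anti (initSeg_prefix _ (le_max_right _ _)) hq₂

lemma dense_of_inter_listCylinder_nonempty {s : Set (ℕ → α)}
    (h : ∀ v : List α, (listCylinder v ∩ s).Nonempty) : Dense s := by
  refine dense_iff_inter_open.mpr fun U hU ⟨x, hx⟩ => ?_
  obtain ⟨n, hn⟩ := exists_listCylinder_subset (hU.mem_nhds hx)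
  obtain ⟨y, hyv, hys⟩ := h (initSeg x n)
  exact ⟨y, hn hyv, hys⟩

variable [DiscreteTopology α]

lemma isOpen_listCylinder (v : List α) : IsOpen (listCylinder v) := by
  have : listCylinder v = ⋂ k : Fin v.length, (fun x : ℕ → α => x k) ⁻¹' {v.get k} := by
    ext; simp [listCylinder]
  rw [this]
  exact isOpen_iInter_of_finite fun k => (isOpen_discrete _).preimage (continuous_apply _)

end Cylinder

lemma isClosed_branches (T : Set (List Bool)) : IsClosed (branches T) := by
  have : branches T = ⋂ n, (fun a (k : Fin n) => a k) ⁻¹' (List.ofFn ⁻¹' T) := by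
    ext; simp [branches, restrictReal]
  rw [this]
  exact isClosed_iInter fun n =>
    (isClosed_discrete _).preimage (continuous_pi fun k => continuous_apply _)

lemma branches_mono {S T : Set (List Bool)} (h : S ⊆ T) : branches S ⊆ branches T :=
  fun _ ha n => h (ha n)

theorem Measurable.exists_isGδ_dense_continuousOn {X Z : Type*} [TopologicalSpace X]
    [BaireSpace X] [MeasurableSpace X] [BorelSpace X] [TopologicalSpace Z]
    [SecondCountableTopology Z] [MeasurableSpace Z] [OpensMeasurableSpace Z] {f : X → Z}
    (hf : Measurable f) : ∃ G, IsGδ G ∧ Dense G ∧ ContinuousOn f G := by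
  have hB := isBasis_countableBasis Z
  have : Countable (countableBasis Z) := (countable_countableBasis Z).to_subtype
  -- Every Borel set agrees with an open set off a meagre set.
  choose U hUo hU using fun t : countableBasis Z =>
    (hf (hB.isOpen t.2).measurableSet).residualEq_isOpen
  obtain ⟨G, hGU, hGδ, hGd⟩ := mem_residual.mp (eventually_countable_forall.mpr hU)
  refine ⟨G, hGδ, hGd, hB.continuousOn_iff.mpr fun t ht => ⟨U ⟨t, ht⟩, hUo _, ?_⟩⟩
  ext x
  exact and_congr_left fun hx => (hGU hx ⟨t, ht⟩).to_iff

lemma IsGδ.exists_isOpen_of_dense_subtype {X : Type*} [TopologicalSpace X] {Y : Set X}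
    {G : Set Y} (hG : IsGδ G) (hd : Dense G) : ∃ W : ℕ → Set X, (∀ n, IsOpen (W n)) ∧
      (∀ n, Y ⊆ closure (W n ∩ Y)) ∧ Y ∩ ⋂ n, W n ⊆ (↑) '' G := by
  obtain ⟨V, hVo, rfl⟩ := isGδ_iff_eq_iInter_nat.mp hG
  choose W hWo hW using fun n => isOpen_induced_iff.mp (hVo n)
  refine ⟨W, hWo, fun n => ?_, fun x ⟨hxY, hxW⟩ => ⟨⟨x, hxY⟩, ?_, rfl⟩⟩
  · have := Subtype.dense_iff.mp (hd.mono (iInter_subset _ n))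
    rwa [← hW n, Subtype.image_preimage_coe, inter_comm] at this
  · exact mem_iInter.mpr fun n => (hW n) ▸ mem_iInter.mp hxW n

theorem Measurable.exists_isOpen_dense_continuousOn {X Z : Type*} [TopologicalSpace X]
    [IsCompletelyMetrizableSpace X] [MeasurableSpace X] [BorelSpace X] [TopologicalSpace Z]
    [SecondCountableTopology Z] [MeasurableSpace Z] [OpensMeasurableSpace Z] {f : X → Z}
    (hf : Measurable f) {Y : Set X} (hY : IsClosed Y) :
    ∃ W : ℕ → Set X, (∀ n, IsOpen (W n)) ∧ (∀ n, Y ⊆ closure (W n ∩ Y)) ∧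
      ContinuousOn f (Y ∩ ⋂ n, W n) := by
  have := hY.isCompletelyMetrizableSpace
  obtain ⟨G, hGδ, hGd, hG⟩ :=
    (hf.comp (measurable_subtype_coe (p := (· ∈ Y)))).exists_isGδ_dense_continuousOn
  obtain ⟨W, hWo, hWd, hWG⟩ := hGδ.exists_isOpen_of_dense_subtype hGd
  exact ⟨W, hWo, hWd, (IsInducing.subtypeVal.continuousOn_image_iff.mpr hG).mono hWG⟩

lemma exists_seq_of_forall_exists_step {σ : Type*} {P : σ → Prop} {R : ℕ → σ → σ → Prop}
    {s₀ : σ} (h₀ : P s₀) (h : ∀ n s, P s → ∃ t, P t ∧ R n s t) :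
    ∃ st : ℕ → σ, st 0 = s₀ ∧ ∀ n, R n (st n) (st (n + 1)) := by
  choose next hnextP hnextR using h
  let st' : ℕ → {s // P s} := fun n =>
    Nat.rec ⟨s₀, h₀⟩ (fun n s => ⟨next n s.1 s.2, hnextP n s.1 s.2⟩) n
  exact ⟨fun n => (st' n).1, rfl, fun n => hnextR n _ (st' n).2⟩

namespace Silver

variable {u : ℕ → List Bool} {i j : ℕ → Bool}

section Words

@[simp] lemma silverWord_zero : silverWord u i 0 = u 0 ++ [i 0] := rfl

lemma silverWord_succ (n : ℕ) :
    silverWord u i (n + 1) = silverWord u i n ++ (u (n + 1) ++ [i (n + 1)]) := rfl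

lemma length_silverWord (n : ℕ) : (silverWord u i n).length = oi u n + 1 := by
  induction n with
  | zero => simp [oi]
  | succ n ih =>
    rw [silverWord_succ, List.length_append, ih, oi, oi, Finset.sum_range_succ _ (n + 1)]
    simp only [List.length_append, List.length_singleton]
    ring

lemma oi_strictMono (u : ℕ → List Bool) : StrictMono (oi u) :=
  strictMono_nat_of_lt_succ fun n => by
    simp only [oi, Finset.sum_range_succ _ (n + 1)]
    omega

lemma le_oi (u : ℕ → List Bool) (n : ℕ) : n ≤ oi u n := (oi_strictMono u).le_apply

lemma silverWord_prefix {n m : ℕ} (h : n ≤ m) : silverWord u i n <+: silverWord u i m := by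
  induction m, h using Nat.le_induction with
  | base => exact List.prefix_refl _
  | succ m _ ih => exact ih.trans (List.prefix_append _ _)

lemma silverWord_congr {n : ℕ} (h : ∀ p ≤ n, i p = j p) :
    silverWord u i n = silverWord u j n := by
  induction n with
  | zero => simp [h 0 le_rfl]
  | succ n ih =>
    rw [silverWord_succ, silverWord_succ, ih fun p hp => h p (by omega), h (n + 1) le_rfl]

lemma eq_of_silverWord_eq {n : ℕ} (h : silverWord u i n = silverWord u j n) :
    ∀ p ≤ n, i p = j p := by
  induction n with
  | zero => simpa using h
  | succ n ih =>
    rw [silverWord_succ, silverWord_succ] at h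
    obtain ⟨hn, hlast⟩ := List.append_inj h (by simp only [length_silverWord])
    intro p hp
    rcases Nat.lt_succ_iff_lt_or_eq.mp (Nat.lt_succ_of_le hp) with hp | rfl
    · exact ih hn p (by omega)
    · simpa using hlast

/-- `u a ⌢ i a ⌢ u (a + 1) ⌢ i (a + 1) ⌢ … ⌢ u (a + k - 1) ⌢ i (a + k - 1)`. -/
def silverBlock (u : ℕ → List Bool) (i : ℕ → Bool) (a : ℕ) : ℕ → List Bool
  | 0 => []
  | k + 1 => silverBlock u i a k ++ (u (a + k) ++ [i (a + k)])

lemma silverWord_add (n k : ℕ) :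
    silverWord u i (n + k) = silverWord u i n ++ silverBlock u i (n + 1) k := by
  induction k with
  | zero => simp [silverBlock]
  | succ k ih =>
    rw [← add_assoc, silverWord_succ, ih, silverBlock, List.append_assoc,
      show n + 1 + k = n + k + 1 by omega]

lemma silverWord_eq_silverBlock (n : ℕ) : silverWord u i n = silverBlock u i 0 (n + 1) := by
  induction n with
  | zero => simp [silverBlock]
  | succ n ih => simp [silverWord_succ, ih, silverBlock]

lemma silverBlock_congr {a k : ℕ} (h : ∀ p, a ≤ p → p < a + k → i p = j p) :
    silverBlock u i a k = silverBlock u j a k := by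
  induction k with
  | zero => rfl
  | succ k ih =>
    rw [silverBlock, silverBlock, ih fun p hp hpk => h p hp (by omega),
      h (a + k) (by omega) (by omega)]

end Words

section Trees

def silverTreeOf (u : ℕ → List Bool) : Set (List Bool) :=
  {s | ∃ (n : ℕ) (i : ℕ → Bool), s <+: silverWord u i n}

lemma isSilver_silverTreeOf (u : ℕ → List Bool) : IsSilver (silverTreeOf u) u := rfl

def silverBranch (u : ℕ → List Bool) (i : ℕ → Bool) : ℕ → Bool :=
  fun k => (silverWord u i k).getD k false

lemma silverBranch_mem_listCylinder (n : ℕ) :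
    silverBranch u i ∈ listCylinder (silverWord u i n) :=
  getD_mem_listCylinder_of_prefix silverWord_prefix
    (fun k => by rw [length_silverWord]; exact Nat.lt_succ_of_le (le_oi u k)) false n

lemma silverBranch_mem_branches : silverBranch u i ∈ branches (silverTreeOf u) := fun n =>
  ⟨n, i, initSeg_prefix_of_mem (silverBranch_mem_listCylinder n)
    (by rw [length_silverWord]; exact Nat.le_succ_of_le (le_oi u n))⟩

lemma exists_mem_listCylinder_silverWord {a : ℕ → Bool} (ha : a ∈ branches (silverTreeOf u))
    (n : ℕ) : ∃ i, a ∈ listCylinder (silverWord u i n) := by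
  obtain ⟨m, i, hpre⟩ := ha (oi u n + 1)
  have hnm : n ≤ m := by
    have := hpre.length_le
    rw [length_silverWord] at this
    simp only [restrictReal, List.length_ofFn] at this
    exact (oi_strictMono u).le_iff_le.mp (by omega)
  refine ⟨i, initSeg_eq_iff.mp ?_⟩
  rw [length_silverWord]
  refine (List.prefix_of_prefix_length_le hpre (silverWord_prefix hnm) ?_).eq_of_length ?_ <;>
    simp [restrictReal, length_silverWord]

lemma eq_of_mem_listCylinder_silverWord {a : ℕ → Bool} {n : ℕ}
    (hi : a ∈ listCylinder (silverWord u i n)) (hj : a ∈ listCylinder (silverWord u j n)) :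
    ∀ p ≤ n, i p = j p := by
  rw [← initSeg_eq_iff] at hi hj
  simp only [length_silverWord] at hi hj
  exact eq_of_silverWord_eq (hi.symm.trans hj)

/-- The tuples of the Silver subtree of `silverTreeOf u` that keeps the splitting levels `K q`
and fills every other splitting level `p` with the bit `g p`. -/
def refineTuples (u : ℕ → List Bool) (K : ℕ → ℕ) (g : ℕ → Bool) : ℕ → List Bool
  | 0 => silverBlock u g 0 (K 0) ++ u (K 0)
  | q + 1 => silverBlock u g (K q + 1) (K (q + 1) - (K q + 1)) ++ u (K (q + 1))

variable {K : ℕ → ℕ}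

lemma silverWord_refineTuples (hK : StrictMono K) (g b : ℕ → Bool) (q : ℕ) :
    silverWord (refineTuples u K g) b q = silverWord u (Function.extend K b g) (K q) := by
  have hfill : ∀ p, (¬∃ r, K r = p) → Function.extend K b g p = g p :=
    fun p hp => Function.extend_apply' _ _ _ hp
  induction q with
  | zero =>
    rw [silverWord_eq_silverBlock (n := K 0), silverBlock, zero_add, hK.injective.extend_apply,
      silverBlock_congr fun p _ hp => hfill p ?_]
    · simp [refineTuples]
    · rintro ⟨r, rfl⟩
      exact absurd (hK.monotone (Nat.zero_le r)) (by simpa using hp)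
  | succ q ih =>
    obtain ⟨d, hd⟩ : ∃ d, K (q + 1) = K q + (d + 1) := ⟨K (q + 1) - (K q + 1), by
      have := hK (by omega : q < q + 1); omega⟩
    rw [silverWord_succ, ih, hd, silverWord_add, silverBlock,
      show K q + 1 + d = K (q + 1) by omega, hK.injective.extend_apply,
      silverBlock_congr (j := g) fun p hp hpd => hfill p ?_]
    · simp [refineTuples, hd, show K q + (d + 1) - (K q + 1) = d by omega]
    · rintro ⟨r, rfl⟩
      rcases le_or_gt r q with h | h
      · have := hK.monotone h; omega
      · have := hK.monotone (show q + 1 ≤ r by omega); omega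

lemma silverTreeOf_refineTuples_subset (hK : StrictMono K) (g : ℕ → Bool) :
    silverTreeOf (refineTuples u K g) ⊆ silverTreeOf u := by
  rintro s ⟨n, b, hs⟩
  exact ⟨K n, Function.extend K b g, silverWord_refineTuples hK g b n ▸ hs⟩

end Trees

abbrev branchesProd (u : ℕ → List Bool) : Set ((ℕ → Bool) × (ℕ → ℕ)) :=
  branches (silverTreeOf u) ×ˢ univ

section Boxes

variable {W : Set ((ℕ → Bool) × (ℕ → ℕ))}

def BoxesSubset (u : ℕ → List Bool) (A : Finset ℕ) (r : ℕ) (g : ℕ → Bool) (v : List ℕ)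
    (W : Set ((ℕ → Bool) × (ℕ → ℕ))) : Prop :=
  ∀ i : ℕ → Bool, (∀ p ≤ r, p ∉ A → i p = g p) →
    listCylinder (silverWord u i r) ×ˢ listCylinder v ⊆ W

lemma BoxesSubset.subset {A : Finset ℕ} {r r' : ℕ} {g i : ℕ → Bool} {v v' : List ℕ}
    (h : BoxesSubset u A r g v W) (hi : ∀ p ≤ r, p ∉ A → i p = g p) (hr : r ≤ r')
    (hv : v <+: v') : listCylinder (silverWord u i r') ×ˢ listCylinder v' ⊆ W :=
  (prod_mono (listCylinder_anti (silverWord_prefix hr)) (listCylinder_anti hv)).trans (h i hi)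

lemma exists_silverWord_prod_subset (hW : IsOpen W)
    (hWd : branchesProd u ⊆ closure (W ∩ branchesProd u)) (N : ℕ) (g₀ : ℕ → Bool)
    (v₀ : List ℕ) : ∃ r ≥ N, ∃ g : ℕ → Bool, (∀ p ≤ N, g p = g₀ p) ∧ ∃ v, v₀ <+: v ∧
      listCylinder (silverWord u g r) ×ˢ listCylinder v ⊆ W := by
  set O := listCylinder (silverWord u g₀ N) ×ˢ listCylinder v₀
  have hO : IsOpen O := (isOpen_listCylinder _).prod (isOpen_listCylinder _)
  have hY : (silverBranch u g₀, fun k => v₀.getD k 0) ∈ branchesProd u :=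
    ⟨silverBranch_mem_branches, mem_univ _⟩
  obtain ⟨q, hqO, hqW, hqY, -⟩ := mem_closure_iff.mp (hWd hY) O hO
    ⟨silverBranch_mem_listCylinder N, getD_mem_listCylinder v₀ 0⟩
  obtain ⟨n, hn⟩ := exists_listCylinder_prod_subset ((hO.inter hW).mem_nhds ⟨hqO, hqW⟩)
  obtain ⟨g, hg⟩ := exists_mem_listCylinder_silverWord hqY (max N n)
  have hnr : n ≤ (silverWord u g (max N n)).length := by
    have := le_oi u (max N n)
    rw [length_silverWord]
    omega
  refine ⟨max N n, le_max_left _ _, g, ?_, initSeg q.2 (max n v₀.length),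
    prefix_initSeg hqO.2 (le_max_right _ _), fun x ⟨hx₁, hx₂⟩ => (hn ⟨?_, ?_⟩).2⟩
  · exact eq_of_mem_listCylinder_silverWord
      (listCylinder_anti (silverWord_prefix (le_max_left _ _)) hg) hqO.1
  · exact listCylinder_anti (initSeg_prefix_of_mem hg hnr) hx₁
  · exact listCylinder_anti (initSeg_prefix _ (le_max_left _ _)) hx₂

lemma exists_boxesSubset (hW : IsOpen W) (hWd : branchesProd u ⊆ closure (W ∩ branchesProd u))
    (A : Finset ℕ) : ∀ N (g₀ : ℕ → Bool) (v₀ : List ℕ), (∀ a ∈ A, a < N) →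
      ∃ r ≥ N, ∃ g : ℕ → Bool, (∀ p < N, g p = g₀ p) ∧ ∃ v, v₀ <+: v ∧
        BoxesSubset u A r g v W := by
  induction A using Finset.induction_on with
  | empty =>
    intro N g₀ v₀ _
    obtain ⟨r, hr, g, hg, v, hv, hsub⟩ := exists_silverWord_prod_subset hW hWd N g₀ v₀
    exact ⟨r, hr, g, fun p hp => hg p hp.le, v, hv, fun i hi =>
      silverWord_congr (fun p hp => hi p hp (Finset.notMem_empty p)) ▸ hsub⟩
  | insert a A haA ih =>
    intro N g₀ v₀ hA
    have hAN : ∀ b ∈ A, b < N := fun b hb => hA b (Finset.mem_insert_of_mem hb)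
    have haN : a < N := hA a (Finset.mem_insert_self a A)
    -- First treat the words with bit `false` at level `a`, then those with bit `true`.
    obtain ⟨r₁, hr₁, g₁, hg₁, v₁, hv₁, h₁⟩ := ih N (Function.update g₀ a false) v₀ hAN
    obtain ⟨r₂, hr₂, g₂, hg₂, v₂, hv₂, h₂⟩ :=
      ih (r₁ + 1) (Function.update g₁ a true) v₁ fun b hb => by have := hAN b hb; omega
    refine ⟨r₂, by omega, Function.update g₂ a (g₀ a), fun p hp => ?_, v₂, hv₁.trans hv₂,
      fun i hi => ?_⟩
    · rcases eq_or_ne p a with rfl | hpa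
      · simp
      · rw [Function.update_of_ne hpa, hg₂ p (by omega), Function.update_of_ne hpa, hg₁ p hp,
          Function.update_of_ne hpa]
    have hi' : ∀ p ≤ r₂, p ∉ A → p ≠ a → i p = g₂ p := fun p hp hpA hpa => by
      rw [hi p hp (by simp [hpA, hpa]), Function.update_of_ne hpa]
    cases hia : i a
    · refine h₁.subset (fun p hp hpA => ?_) (by omega) hv₂
      rcases eq_or_ne p a with rfl | hpa
      · rw [hia, hg₁ p haN, Function.update_self]
      · rw [hi' p (by omega) hpA hpa, hg₂ p (by omega), Function.update_of_ne hpa]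
    · refine h₂ i fun p hp hpA => ?_
      rcases eq_or_ne p a with rfl | hpa
      · rw [hia, hg₂ p (by omega), Function.update_self]
      · exact hi' p hp hpA hpa

end Boxes

section Fusion

/-- The bits at the splitting levels `≤ level` are given by `filler`, except at the `kept` ones. -/
structure FusionState where
  level : ℕ
  filler : ℕ → Bool
  kept : Finset ℕ
  word : List ℕ

structure FusionStep (u : ℕ → List Bool) (W : Set ((ℕ → Bool) × (ℕ → ℕ))) (w : List ℕ)
    (s t : FusionState) : Prop where
  kept_eq : t.kept = insert (s.level + 1) s.kept
  level_lt : s.level + 1 < t.level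
  filler_eq : ∀ p ≤ s.level + 1, t.filler p = s.filler p
  word_prefix : w <+: t.word
  boxesSubset : BoxesSubset u t.kept t.level t.filler t.word W

lemma exists_fusionStep {W : Set ((ℕ → Bool) × (ℕ → ℕ))} (hW : IsOpen W)
    (hWd : branchesProd u ⊆ closure (W ∩ branchesProd u)) (w : List ℕ) {s : FusionState}
    (hs : ∀ a ∈ s.kept, a ≤ s.level) :
    ∃ t : FusionState, (∀ a ∈ t.kept, a ≤ t.level) ∧ FusionStep u W w s t := by
  obtain ⟨r, hr, g, hg, v, hv, hbox⟩ := exists_boxesSubset hW hWd (insert (s.level + 1) s.kept)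
    (s.level + 2) s.filler w fun a ha => by
      rcases Finset.mem_insert.mp ha with rfl | ha
      · omega
      · have := hs a ha; omega
  refine ⟨⟨r, g, insert (s.level + 1) s.kept, v⟩, fun a ha => ?_, rfl, by dsimp; omega,
    fun p hp => hg p (by omega), hv, hbox⟩
  rcases Finset.mem_insert.mp ha with rfl | ha
  · dsimp; omega
  · have := hs a ha; dsimp; omega

def IsFusionSeq (u : ℕ → List Bool) (W : ℕ → Set ((ℕ → Bool) × (ℕ → ℕ)))
    (e : ℕ → ℕ × List ℕ) (st : ℕ → FusionState) : Prop :=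
  ∀ j, FusionStep u (W (e j).1) (e j).2 (st j) (st (j + 1))

variable {W : ℕ → Set ((ℕ → Bool) × (ℕ → ℕ))} {e : ℕ → ℕ × List ℕ} {st : ℕ → FusionState}

lemma IsFusionSeq.level_strictMono (hst : IsFusionSeq u W e st) :
    StrictMono fun j => (st j).level :=
  strictMono_nat_of_lt_succ fun j => by have := (hst j).level_lt; omega

lemma IsFusionSeq.mem_kept_iff (hst : IsFusionSeq u W e st) (h₀ : (st 0).kept = ∅)
    {j p : ℕ} : p ∈ (st j).kept ↔ ∃ q < j, (st q).level + 1 = p := by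
  induction j with
  | zero => simp [h₀]
  | succ j ih =>
    rw [(hst j).kept_eq, Finset.mem_insert, ih]
    constructor
    · rintro (rfl | ⟨q, hq, rfl⟩)
      exacts [⟨j, by omega, rfl⟩, ⟨q, by omega, rfl⟩]
    · rintro ⟨q, hq, rfl⟩
      rcases Nat.lt_succ_iff_lt_or_eq.mp hq with hq | rfl
      exacts [Or.inr ⟨q, hq, rfl⟩, Or.inl rfl]

lemma IsFusionSeq.exists_limit_filler (hst : IsFusionSeq u W e st) :
    ∃ g : ℕ → Bool, ∀ j, ∀ p ≤ (st j).level + 1, g p = (st j).filler p := by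
  have stable : ∀ {j m}, j ≤ m → ∀ p ≤ (st j).level + 1, (st m).filler p = (st j).filler p := by
    intro j m hjm
    induction m, hjm using Nat.le_induction with
    | base => exact fun _ _ => rfl
    | succ m hjm ih =>
      intro p hp
      rw [(hst m).filler_eq p (hp.trans (by have := hst.level_strictMono.monotone hjm; omega)),
        ih p hp]
  refine ⟨fun p => (st p).filler p, fun j p hp => ?_⟩
  rcases le_total j p with hjp | hpj
  · exact stable hjp p hp
  · exact (stable hpj p (by have := hst.level_strictMono.le_apply (x := p); omega)).symm

lemma IsFusionSeq.prod_subset (hst : IsFusionSeq u W e st) (h₀ : (st 0).kept = ∅)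
    {g : ℕ → Bool} (hg : ∀ j, ∀ p ≤ (st j).level + 1, g p = (st j).filler p) {a : ℕ → Bool}
    (ha : a ∈ branches (silverTreeOf (refineTuples u (fun j => (st j).level + 1) g)))
    (j : ℕ) : {a} ×ˢ listCylinder (st (j + 1)).word ⊆ W (e j).1 := by
  obtain ⟨b, hb⟩ := exists_mem_listCylinder_silverWord ha (j + 1)
  rw [silverWord_refineTuples (hst.level_strictMono.add_const 1)] at hb
  rintro ⟨a', x⟩ ⟨rfl, hx⟩
  refine (hst j).boxesSubset.subset (fun p hp hpA => ?_) (Nat.le_succ _) (List.prefix_refl _)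
    ⟨hb, hx⟩
  rw [Function.extend_apply' _ _ _ ?_, hg (j + 1) p (by omega)]
  rintro ⟨q, rfl⟩
  rcases lt_or_ge q (j + 1) with hq | hq
  · exact hpA ((hst.mem_kept_iff h₀).mpr ⟨q, hq, rfl⟩)
  · have := hst.level_strictMono.monotone hq; omega

theorem exists_silverTreeOf_prod_subset (hW : ∀ c, IsOpen (W c))
    (hWd : ∀ c, branchesProd u ⊆ closure (W c ∩ branchesProd u)) :
    ∃ w, silverTreeOf w ⊆ silverTreeOf u ∧ ∃ D : Set (ℕ → ℕ), IsGδ D ∧ Dense D ∧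
      branches (silverTreeOf w) ×ˢ D ⊆ ⋂ c, W c := by
  obtain ⟨e, he⟩ := exists_surjective_nat (ℕ × List ℕ)
  obtain ⟨st, hst₀, hst⟩ := exists_seq_of_forall_exists_step
    (P := fun s : FusionState => ∀ a ∈ s.kept, a ≤ s.level)
    (R := fun j => FusionStep u (W (e j).1) (e j).2) (s₀ := ⟨0, fun _ => false, ∅, []⟩)
    (by simp) fun j _ hs => exists_fusionStep (hW _) (hWd _) _ hs
  replace hst : IsFusionSeq u W e st := hst
  obtain ⟨g, hg⟩ := hst.exists_limit_filler
  set O : ℕ → Set (ℕ → ℕ) := fun c => ⋃ j ∈ {j | (e j).1 = c}, listCylinder (st (j + 1)).word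
  have hO : ∀ c, IsOpen (O c) := fun c => isOpen_biUnion fun _ _ => isOpen_listCylinder _
  have hOd : ∀ c, Dense (O c) := fun c => dense_of_inter_listCylinder_nonempty fun v => by
    obtain ⟨j, hj⟩ := he (c, v)
    have hv : v <+: (st (j + 1)).word := by simpa [hj] using (hst j).word_prefix
    exact ⟨_, listCylinder_anti hv (getD_mem_listCylinder _ 0),
      mem_biUnion (x := j) (by simp [hj]) (getD_mem_listCylinder _ 0)⟩
  refine ⟨_, silverTreeOf_refineTuples_subset (hst.level_strictMono.add_const 1) g, ⋂ c, O c,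
    .iInter_of_isOpen hO, dense_iInter_of_isOpen hO hOd, fun ⟨a, x⟩ ⟨ha, hx⟩ => ?_⟩
  refine mem_iInter.mpr fun c => ?_
  obtain ⟨j, rfl, hxj⟩ := mem_iUnion₂.mp (mem_iInter.mp hx c)
  exact hst.prod_subset (by rw [hst₀]) hg ha j ⟨rfl, hxj⟩

end Fusion

end Silver

/-- if `T` is a Silver tree and `f : 2^ω × ω^ω → 2^ω` is Borel,
then there are a Silver tree `S ⊆ T` and a dense `G_δ` set `D ⊆ ω^ω` such that
`f` is continuous on `[S] × D`. -/
theorem stmt8 (T : Set (List Bool)) (hT : SilverTree T)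
    (f : (ℕ → Bool) × (ℕ → ℕ) → (ℕ → Bool)) (hf : Measurable f) :
    ∃ (S : Set (List Bool)) (D : Set (ℕ → ℕ)),
      SilverTree S ∧ S ⊆ T ∧ IsGδ D ∧ Dense D ∧
      ContinuousOn f (branches S ×ˢ D) := by
  obtain ⟨u, rfl⟩ := hT
  obtain ⟨W, hWo, hWd, hfW⟩ :=
    hf.exists_isOpen_dense_continuousOn ((isClosed_branches (Silver.silverTreeOf u)).prod
      isClosed_univ)
  obtain ⟨w, hwu, D, hD, hDd, hwD⟩ := Silver.exists_silverTreeOf_prod_subset hWo hWd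
  exact ⟨Silver.silverTreeOf w, D, ⟨w, Silver.isSilver_silverTreeOf w⟩, hwu, hD, hDd,
    hfW.mono fun p hp => ⟨⟨branches_mono hwu hp.1, mem_univ _⟩, hwD hp⟩⟩
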